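/- arXiv:1811.05127 — 6 statements merged into one kernel-verified Lean document; each statement's English description precedes it below -/
import Mathlib

section
/- Let k > 1 be an integer and let p be the smallest prime not dividing k. Then among any 2^p consecutive positive integers there exists one, say n, with p dividing τ(n); in particular τ(n) ≠ k, so there is no run of 2^p consecutive integers each with exactly k divisors. -/
theorem no_run_two_pow_smallest_prime (k p : ℕ) (hk : 1 < k) (hp : p.Prime)
    (hpk : ¬ p ∣ k) (hmin : ∀ q : ℕ, q.Prime → ¬ q ∣ k → p ≤ q) :
    ∀ n : ℕ, 0 < n → ∃ i < 2 ^ p,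
      p ∣ (n + i).divisors.card ∧ (n + i).divisors.card ≠ k := by
  intro n hn
  have h2p : 0 < 2 ^ p := Nat.pow_pos (by norm_num)
  have hhalf : 2 ^ (p - 1) < 2 ^ p := Nat.pow_lt_pow_right (by norm_num) (Nat.sub_lt hp.pos one_pos)
  set A := 2 ^ (p - 1) + 2 ^ p - n % 2 ^ p with hA
  set i := A % 2 ^ p with hi
  have hilt : i < 2 ^ p := Nat.mod_lt _ h2p
  refine ⟨i, hilt, ?_⟩
  have hr : n % 2 ^ p < 2 ^ p := Nat.mod_lt _ h2p
  have hp1 : 0 < p := hp.pos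
  have hm : (n + i) % 2 ^ p = 2 ^ (p - 1) := by
    have h1 : (n + i) % 2 ^ p = (n % 2 ^ p + A % 2 ^ p) % 2 ^ p := by
      rw [hi, Nat.add_mod, Nat.mod_mod_of_dvd _ dvd_rfl]
    have h2 : (n % 2 ^ p + A % 2 ^ p) % 2 ^ p = (n % 2 ^ p + A) % 2 ^ p := by
      conv_rhs => rw [Nat.add_mod]
      rw [Nat.mod_mod_of_dvd _ dvd_rfl]
    have key : n % 2 ^ p + A = 2 ^ (p - 1) + 2 ^ p :=
      Nat.add_sub_cancel' (le_of_lt (lt_of_lt_of_le hr (Nat.le_add_left _ _)))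
    rw [h1, h2, key, Nat.add_mod_right, Nat.mod_eq_of_lt hhalf]
  set m := n + i with hmdef
  have hpp : 2 ^ p = 2 ^ (p - 1) * 2 := by
    rw [← pow_succ]
    congr 1
    omega
  have hsplit : m = 2 ^ (p - 1) * (2 * (m / 2 ^ p) + 1) := by
    conv_lhs => rw [← Nat.div_add_mod m (2 ^ p), hm]
    rw [hpp]; ring
  obtain ⟨q, hq⟩ : ∃ q, m = 2 ^ (p - 1) * (2 * q + 1) := ⟨m / 2 ^ p, hsplit⟩
  have hcop : Nat.Coprime (2 ^ (p - 1)) (2 * q + 1) := by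
    apply Nat.Coprime.pow_left
    rw [Nat.Prime.coprime_iff_not_dvd Nat.prime_two]
    omega
  have hcard : m.divisors.card = p * (2 * q + 1).divisors.card := by
    rw [hq, hcop.card_divisors_mul]
    congr 1
    rw [Nat.divisors_prime_pow Nat.prime_two, Finset.card_map, Finset.card_range]
    omega
  have hdvd : p ∣ m.divisors.card := ⟨_, hcard⟩
  exact ⟨hdvd, fun h => hpk (h ▸ hdvd)⟩
end

section
/- Suppose k is divisible by 2^s but not by 2^(s+1) for some s ≥ 1. Then there do not exist 2^(2^s + 1) consecutive positive integers each with exactly k divisors. -/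
open Finset

lemma aux_card_divisors_two_pow (e : ℕ) : ((2 : ℕ) ^ e).divisors.card = e + 1 := by
  rw [Nat.divisors_prime_pow Nat.prime_two, Finset.card_map, Finset.card_range]

lemma aux_isSquare_of_odd_card_divisors {m : ℕ} (hm : m ≠ 0)
    (h : Odd m.divisors.card) : IsSquare m := by
  rw [Nat.card_divisors hm] at h
  have heven : ∀ p ∈ m.primeFactors, Even (m.factorization p) := by
    intro p hp
    rcases Nat.even_or_odd (m.factorization p) with he | ho
    · exact he
    · exfalso
      have h2 : 2 ∣ m.factorization p + 1 := ho.add_one.two_dvd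
      have hdvd : (m.factorization p + 1) ∣ m.primeFactors.prod (m.factorization · + 1) :=
        Finset.dvd_prod_of_mem _ hp
      exact (Nat.not_even_iff_odd.mpr h) ((even_iff_two_dvd).mpr (h2.trans hdvd))
  refine ⟨∏ p ∈ m.primeFactors, p ^ (m.factorization p / 2), ?_⟩
  rw [← Finset.prod_mul_distrib]
  have hco : ∀ p ∈ m.primeFactors,
      p ^ (m.factorization p / 2) * p ^ (m.factorization p / 2) = p ^ m.factorization p := by
    intro p hp
    rw [← pow_add]
    congr 1
    obtain ⟨c, hc⟩ := heven p hp
    omega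
  rw [Finset.prod_congr rfl hco, Nat.prod_primeFactors_prod_factorization]
  exact (Nat.factorization_prod_pow_eq_self hm).symm

lemma aux_no_two_squares (q : ℕ) (h1 : IsSquare (2 * q + 1)) (h3 : IsSquare (2 * q + 3)) :
    False := by
  obtain ⟨a, ha⟩ := h1
  obtain ⟨c, hc⟩ := h3
  have hac : a < c := by nlinarith
  have h4 : a + 1 ≤ c := hac
  nlinarith [Nat.mul_le_mul h4 h4]

theorem no_long_run_two_adic (s k : ℕ) (hs : 1 ≤ s)
    (h1 : 2 ^ s ∣ k) (h2 : ¬ 2 ^ (s + 1) ∣ k) :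
    ∀ n : ℕ, 0 < n → ¬ (∀ i < 2 ^ (2 ^ s + 1), (n + i).divisors.card = k) := by
  intro n hn H
  set e : ℕ := 2 ^ s - 1 with he_def
  have hspos : 2 ≤ 2 ^ s := by
    calc 2 = 2 ^ 1 := rfl
    _ ≤ 2 ^ s := Nat.pow_le_pow_right (by norm_num) hs
  have he1 : e + 1 = 2 ^ s := by omega
  set E : ℕ := 2 ^ e with hE_def
  have hEpos : 0 < E := Nat.pow_pos (by norm_num)
  have hR : 2 ^ (2 ^ s + 1) = 4 * E := by
    rw [← he1]; ring
  obtain ⟨i, q, hiq, hilt⟩ : ∃ i q, n + i = 2 * E * q + E ∧ i < 2 * E := by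
    have hmod : n % (2 * E) < 2 * E := Nat.mod_lt _ (by omega)
    have hdiv : n = 2 * E * (n / (2 * E)) + n % (2 * E) := (Nat.div_add_mod n (2 * E)).symm
    rcases le_or_gt (n % (2 * E)) E with hle | hlt
    · exact ⟨E - n % (2 * E), n / (2 * E), by omega, by omega⟩
    · refine ⟨2 * E + E - n % (2 * E), n / (2 * E) + 1, ?_, by omega⟩
      have : 2 * E * (n / (2 * E) + 1) = 2 * E * (n / (2 * E)) + 2 * E := by ring
      omega
  have hb1 : n + i = E * (2 * q + 1) := by rw [hiq]; ring
  have hb2 : n + (i + 2 * E) = E * (2 * q + 3) := by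
    have h' : n + (i + 2 * E) = (n + i) + 2 * E := by ring
    rw [h', hiq]; ring
  have hcard : ∀ m' : ℕ, Odd m' →
      (E * m').divisors.card = 2 ^ s * m'.divisors.card := by
    intro m' hm'
    have hcop : Nat.Coprime E m' :=
      Nat.Coprime.pow_left e ((Nat.prime_two.coprime_iff_not_dvd).mpr
        (by rw [Nat.odd_iff] at hm'; omega))
    rw [hcop.card_divisors_mul, hE_def, aux_card_divisors_two_pow, he1]
  have k1 : k = 2 ^ s * (2 * q + 1).divisors.card := by
    rw [← H i (by omega), hb1, hcard _ (by exact ⟨q, by ring⟩)]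
  have k2 : k = 2 ^ s * (2 * q + 3).divisors.card := by
    rw [← H (i + 2 * E) (by omega), hb2, hcard _ (by exact ⟨q + 1, by ring⟩)]
  have hodd : ∀ d : ℕ, k = 2 ^ s * d → Odd d := by
    intro d hd
    rcases Nat.even_or_odd d with he | ho
    · exfalso
      obtain ⟨c, hc⟩ := he
      exact h2 ⟨c, by rw [hd, hc, pow_succ]; ring⟩
    · exact ho
  exact aux_no_two_squares q
    (aux_isSquare_of_odd_card_divisors (by omega) (hodd _ k1))
    (aux_isSquare_of_odd_card_divisors (by omega) (hodd _ k2))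
end

section
/- Let n ≡ 2 (mod 8) with τ(n) = 6p for an odd prime p. Then n = 2x² for some odd integer x; more precisely, n = 2·q^(p−1)·r² or n = 2·r^(3p−1) for distinct odd primes q, r. -/
private lemma tau_prime_pow (q k : ℕ) (hq : q.Prime) :
    (q ^ k).divisors.card = k + 1 := by
  rw [Nat.divisors_prime_pow hq, Finset.card_map, Finset.card_range]

private lemma tau_eq_one (k : ℕ) (hk : k ≠ 0) (h : k.divisors.card = 1) : k = 1 := by
  obtain ⟨x, hx⟩ := Finset.card_eq_one.mp h
  have h1 : (1 : ℕ) ∈ k.divisors := Nat.one_mem_divisors.mpr hk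
  have h2 : k ∈ k.divisors := Nat.mem_divisors_self k hk
  rw [hx, Finset.mem_singleton] at h1 h2
  omega

open Nat in
private lemma decomp (k q : ℕ) (hk : k ≠ 0) (hq : q.Prime) (hdvd : q ∣ k) :
    ∃ a k', 1 ≤ a ∧ ¬ q ∣ k' ∧ k = q ^ a * k' ∧
      k.divisors.card = (a + 1) * k'.divisors.card := by
  refine ⟨k.factorization q, ordCompl[q] k, ?_, Nat.not_dvd_ordCompl hq hk, ?_, ?_⟩
  · exact (hq.factorization_pos_of_dvd hk hdvd)
  · exact (Nat.ordProj_mul_ordCompl_eq_self k q).symm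
  · have hcop : (q ^ k.factorization q).Coprime (ordCompl[q] k) :=
      Nat.Coprime.pow_left _ (hq.coprime_iff_not_dvd.mpr (Nat.not_dvd_ordCompl hq hk))
    conv_lhs => rw [← Nat.ordProj_mul_ordCompl_eq_self k q]
    rw [hcop.card_divisors_mul, tau_prime_pow _ _ hq]

private lemma tau_prime (k ℓ : ℕ) (hℓ : ℓ.Prime) (h : k.divisors.card = ℓ) :
    ∃ r, r.Prime ∧ k = r ^ (ℓ - 1) := by
  have hk : k ≠ 0 := by
    rintro rfl; simp at h; exact hℓ.ne_zero h.symm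
  have hk1 : k ≠ 1 := by
    rintro rfl; simp at h; exact hℓ.ne_one h.symm
  obtain ⟨r, hr, hrd⟩ := Nat.exists_prime_and_dvd hk1
  obtain ⟨a, k', ha, hnd, hke, hcard⟩ := decomp k r hk hr hrd
  rw [h] at hcard
  have hdvd : (a + 1) ∣ ℓ := ⟨_, hcard⟩
  have := (Nat.Prime.eq_one_or_self_of_dvd hℓ _ hdvd)
  have haℓ : a + 1 = ℓ := by omega
  have hk' : k'.divisors.card = 1 := by
    have hℓ0 := hℓ.pos; nlinarith [hcard, haℓ]
  have hk'0 : k' ≠ 0 := by rintro rfl; rw [Nat.mul_zero] at hke; exact hk hke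
  have := tau_eq_one k' hk'0 hk'
  exact ⟨r, hr, by rw [hke, this, mul_one, ← haℓ]; simp⟩

private lemma odd_of_prime_dvd_odd {r m : ℕ} (hr : r.Prime) (hdvd : r ∣ m) (hm : Odd m) :
    Odd r := by
  rcases hr.eq_two_or_odd' with h | h
  · subst h; exact absurd (hm.of_dvd_nat hdvd) (by decide)
  · exact h

theorem shape_of_two_mod_eight_six_p (n p : ℕ) (hn : n % 8 = 2)
    (hp : p.Prime) (hodd : Odd p) (hτ : n.divisors.card = 6 * p) :
    (∃ x : ℕ, Odd x ∧ n = 2 * x ^ 2) ∧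
      ((∃ q r : ℕ, q.Prime ∧ r.Prime ∧ Odd q ∧ Odd r ∧ q ≠ r ∧
          n = 2 * q ^ (p - 1) * r ^ 2) ∨
        (∃ r : ℕ, r.Prime ∧ Odd r ∧ n = 2 * r ^ (3 * p - 1))) := by
  -- n = 2 * m with m odd
  obtain ⟨m, hm, hmodd⟩ : ∃ m, n = 2 * m ∧ m % 2 = 1 := ⟨n / 2, by omega, by omega⟩
  have hmodd' : Odd m := Nat.odd_iff.mpr hmodd
  have hm0 : m ≠ 0 := by omega
  have hcop : (Nat.Coprime 2 m) := by
    rw [Nat.coprime_two_left]; exact hmodd'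
  have hτm : m.divisors.card = 3 * p := by
    rw [hm, hcop.card_divisors_mul] at hτ
    have : (2 : ℕ).divisors.card = 2 := by decide
    rw [this] at hτ; omega
  have hp3 : 3 ≤ p := by
    rcases hodd with ⟨j, hj⟩; have := hp.two_le; omega
  have hm1 : m ≠ 1 := by
    rintro rfl; simp at hτm; omega
  obtain ⟨q, hq, hqd⟩ := Nat.exists_prime_and_dvd hm1
  obtain ⟨a, m', ha, hnd, hme, hcard⟩ := decomp m q hm0 hq hqd
  rw [hτm] at hcard
  have hqodd : Odd q := odd_of_prime_dvd_odd hq hqd hmodd'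
  have hm'odd : Odd m' := by
    have : m' ∣ m := ⟨q ^ a, by rw [hme]; ring⟩
    exact hmodd'.of_dvd_nat this
  -- case analysis on (a+1) * τ(m') = 3 * p
  set v := m'.divisors.card with hv
  have hm'0 : m' ≠ 0 := by rintro rfl; rw [Nat.mul_zero] at hme; exact hm0 hme
  have hcases : (a + 1 = 3 * p ∧ v = 1) ∨ (a + 1 = 3 ∧ v = p) ∨ (a + 1 = p ∧ v = 3) := by
    have hpd : p ∣ (a + 1) * v := ⟨3, by omega⟩
    rcases (hp.dvd_mul.mp hpd) with hpu | hpv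
    · obtain ⟨u', hu'⟩ := hpu
      have h3 : u' * v = 3 := by
        have hp0 := hp.pos; nlinarith [hcard, hu']
      have hu'd : u' ∣ 3 := ⟨v, h3.symm⟩
      have : u' ≤ 3 := Nat.le_of_dvd (by norm_num) hu'd
      interval_cases u' <;> omega
    · obtain ⟨v', hv'⟩ := hpv
      have h3 : (a + 1) * v' = 3 := by
        have hp0 := hp.pos; nlinarith [hcard, hv']
      have : a + 1 ≤ 3 := Nat.le_of_dvd (by norm_num) ⟨v', h3.symm⟩
      have ha2 : a ≤ 2 := by omega
      interval_cases a <;> omega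
  -- helper to find odd exponents halves
  rcases hcases with ⟨hu, hv1⟩ | ⟨hu, hv1⟩ | ⟨hu, hv1⟩
  · -- m = q ^ (3p - 1)
    have := tau_eq_one m' hm'0 hv1
    subst this
    rw [mul_one] at hme
    have hae : a = 3 * p - 1 := by omega
    subst hae
    refine ⟨⟨q ^ ((3 * p - 1) / 2), hqodd.pow, ?_⟩, Or.inr ⟨q, hq, hqodd, by rw [hm, hme]⟩⟩
    have he : (3 * p - 1) / 2 * 2 = 3 * p - 1 := by rcases hodd with ⟨j, hj⟩; omega
    rw [hm, hme, ← pow_mul, he]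
  · -- a = 2, τ(m') = p ⟹ m' = r ^ (p-1)
    obtain ⟨r, hr, hm'e⟩ := tau_prime m' p hp (by omega)
    have hrodd : Odd r := by
      apply odd_of_prime_dvd_odd hr _ hm'odd
      rw [hm'e]; exact dvd_pow_self r (by omega)
    have hqr : q ≠ r := by
      rintro rfl
      exact hnd (by rw [hm'e]; exact dvd_pow_self q (by omega))
    have hae : a = 2 := by omega
    subst hae
    refine ⟨⟨r ^ ((p - 1) / 2) * q, hrodd.pow.mul hqodd, ?_⟩,
      Or.inl ⟨r, q, hr, hq, hrodd, hqodd, hqr.symm, ?_⟩⟩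
    · rw [hm, hme, hm'e, mul_pow, ← pow_mul]
      have : (p - 1) / 2 * 2 = p - 1 := by rcases hodd with ⟨j, hj⟩; omega
      rw [this]; ring
    · rw [hm, hme, hm'e]; ring
  · -- a = p - 1, τ(m') = 3 ⟹ m' = r ^ 2
    obtain ⟨r, hr, hm'e⟩ := tau_prime m' 3 (by norm_num) (by omega)
    norm_num at hm'e
    have hrodd : Odd r := by
      apply odd_of_prime_dvd_odd hr _ hm'odd
      rw [hm'e]; exact dvd_pow_self r (by omega)
    have hqr : q ≠ r := by
      rintro rfl
      exact hnd (by rw [hm'e]; exact dvd_pow_self q (by omega))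
    have hae : a = p - 1 := by omega
    subst hae
    refine ⟨⟨q ^ ((p - 1) / 2) * r, hqodd.pow.mul hrodd, ?_⟩,
      Or.inl ⟨q, r, hq, hr, hqodd, hrodd, hqr, ?_⟩⟩
    · rw [hm, hme, hm'e, mul_pow, ← pow_mul]
      have : (p - 1) / 2 * 2 = p - 1 := by rcases hodd with ⟨j, hj⟩; omega
      rw [this]
    · rw [hm, hme, hm'e]; ring
end

section
/- If k ≡ 2 (mod 12) or k ≡ 10 (mod 12), then there is no run of 6 consecutive positive integers each with exactly k divisors (i.e., M(k) ≤ 5). -/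
lemma isSquare_of_odd_card_divisors (u : ℕ) (hu : u ≠ 0)
    (h : Odd u.divisors.card) : IsSquare u := by
  have heven : ∀ p ∈ u.primeFactors, Even (u.factorization p) := by
    intro p hp
    by_contra hodd
    have h2 : 2 ∣ (u.factorization p + 1) := by
      rcases Nat.even_or_odd (u.factorization p) with he | ho
      · exact absurd he hodd
      · obtain ⟨c, hc⟩ := ho; omega
    have hdvd : (u.factorization p + 1) ∣ u.primeFactors.prod (u.factorization · + 1) :=
      Finset.dvd_prod_of_mem _ hp
    rw [← Nat.card_divisors hu] at hdvd
    have h2c : 2 ∣ u.divisors.card := h2.trans hdvd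
    rw [Nat.odd_iff] at h
    omega
  refine ⟨∏ p ∈ u.primeFactors, p ^ (u.factorization p / 2), ?_⟩
  rw [← Finset.prod_mul_distrib]
  have : ∀ p ∈ u.primeFactors,
      p ^ (u.factorization p / 2) * p ^ (u.factorization p / 2) = p ^ (u.factorization p) := by
    intro p hp
    rw [← pow_add]
    congr 1
    obtain ⟨c, hc⟩ := heven p hp
    omega
  rw [Finset.prod_congr rfl this]
  conv_lhs => rw [← Nat.factorization_prod_pow_eq_self hu]
  rfl

lemma odd_square_mod8 (u : ℕ) (hodd : u % 2 = 1) (hsq : IsSquare u) : u % 8 = 1 := by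
  obtain ⟨a, rfl⟩ := hsq
  have ha : a % 2 = 1 :=
    Nat.odd_iff.mp ((Nat.odd_mul.mp (Nat.odd_iff.mpr hodd)).1)
  have h8 : a % 8 = 1 ∨ a % 8 = 3 ∨ a % 8 = 5 ∨ a % 8 = 7 := by omega
  rw [Nat.mul_mod]
  rcases h8 with h | h | h | h <;> rw [h]

lemma card_divisors_four_mul (u : ℕ) (hu : u % 2 = 1) :
    (4 * u).divisors.card = 3 * u.divisors.card := by
  have hcop2 : Nat.Coprime 2 u := (Nat.Prime.coprime_iff_not_dvd Nat.prime_two).mpr (by omega)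
  have hcop : Nat.Coprime 4 u := by simpa using hcop2.pow_left 2
  rw [hcop.card_divisors_mul]
  have h4 : (4 : ℕ).divisors.card = 3 := by decide
  rw [h4]

lemma card_divisors_two_mul (u : ℕ) (hu : u % 2 = 1) :
    (2 * u).divisors.card = 2 * u.divisors.card := by
  have hcop : Nat.Coprime 2 u := (Nat.Prime.coprime_iff_not_dvd Nat.prime_two).mpr (by omega)
  rw [hcop.card_divisors_mul]
  have h2 : (2 : ℕ).divisors.card = 2 := by decide
  rw [h2]

theorem M_le_five_of_two_or_ten_mod_twelve (k : ℕ)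
    (hk : k % 12 = 2 ∨ k % 12 = 10) :
    ∀ n : ℕ, 0 < n → ¬ (∀ i < 6, (n + i).divisors.card = k) := by
  intro n hn h
  -- in any window of 6 consecutive integers there is one ≡ 4 (mod 8) or one ≡ 6 (mod 8)
  have key : ∃ i, i < 6 ∧ ((n + i) % 8 = 4 ∨ (n + i) % 8 = 6) := by
    have h8 : n % 8 = 0 ∨ n % 8 = 1 ∨ n % 8 = 2 ∨ n % 8 = 3 ∨ n % 8 = 4 ∨ n % 8 = 5 ∨
        n % 8 = 6 ∨ n % 8 = 7 := by omega
    rcases h8 with h8 | h8 | h8 | h8 | h8 | h8 | h8 | h8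
    · exact ⟨4, by omega, by omega⟩
    · exact ⟨3, by omega, by omega⟩
    · exact ⟨2, by omega, by omega⟩
    · exact ⟨1, by omega, by omega⟩
    · exact ⟨0, by omega, by omega⟩
    · exact ⟨1, by omega, by omega⟩
    · exact ⟨0, by omega, by omega⟩
    · exact ⟨5, by omega, by omega⟩
  obtain ⟨i, hi, h4 | h6⟩ := key
  · -- case m ≡ 4 (mod 8): τ(m) = 3 τ(m/4), so 3 ∣ k, contradiction
    set m := n + i with hm
    have hmk : m.divisors.card = k := h i hi
    have hrep : m = 4 * (m / 4) := by omega
    have hodd : (m / 4) % 2 = 1 := by omega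
    rw [hrep, card_divisors_four_mul _ hodd] at hmk
    omega
  · -- case m ≡ 6 (mod 8): τ(m) = 2 τ(m/2), k ≡ 2 (mod 4) gives τ(m/2) odd,
    -- so m/2 is an odd square ≡ 1 (mod 8), but m/2 ≡ 3 (mod 4)
    set m := n + i with hm
    have hmk : m.divisors.card = k := h i hi
    have hrep : m = 2 * (m / 2) := by omega
    have hodd : (m / 2) % 2 = 1 := by omega
    rw [hrep, card_divisors_two_mul _ hodd] at hmk
    have hne : m / 2 ≠ 0 := by omega
    have hoddcard : Odd (m / 2).divisors.card := by
      rcases Nat.even_or_odd (m / 2).divisors.card with he | ho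
      · obtain ⟨c, hc⟩ := he; omega
      · exact ho
    have hsq := isSquare_of_odd_card_divisors _ hne hoddcard
    have := odd_square_mod8 _ hodd hsq
    omega
end

section
/- Let p and q be primes greater than 3 (not necessarily distinct). Then there is no run of 5 consecutive positive integers each with exactly 2pq divisors, i.e., M(2pq) ≤ 4. -/
lemma tau_prime_pow_s16 {r : ℕ} (hr : r.Prime) (k : ℕ) : ((r^k).divisors).card = k + 1 := by
  rw [Nat.divisors_prime_pow hr, Finset.card_map, Finset.card_range]

lemma tau_split {r m : ℕ} (hr : r.Prime) (hm : m ≠ 0) :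
    m.divisors.card = (m.factorization r + 1) * (ordCompl[r] m).divisors.card := by
  conv_lhs => rw [← Nat.ordProj_mul_ordCompl_eq_self m r]
  rw [Nat.Coprime.card_divisors_mul ((Nat.coprime_ordCompl hr hm).pow_left _),
    tau_prime_pow_s16 hr]

lemma sq_of_even_fact {m : ℕ} (hm : m ≠ 0) (h : ∀ r, Even (m.factorization r)) :
    ∃ s, m = s^2 := by
  refine ⟨m.factorization.prod fun r k => r^(k/2), ?_⟩
  rw [Finsupp.prod, ← Finset.prod_pow]
  conv_lhs => rw [← Nat.factorization_prod_pow_eq_self hm]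
  rw [Finsupp.prod]
  refine Finset.prod_congr rfl fun x _ => ?_
  rw [← pow_mul]
  congr 1
  obtain ⟨c, hc⟩ := h x
  omega

lemma fact_pow_mul {r c u : ℕ} (hr : r.Prime) (hu : ¬ r ∣ u) (hu0 : u ≠ 0) :
    (r^c * u).factorization r = c := by
  rw [Nat.factorization_mul (pow_ne_zero _ hr.pos.ne') hu0]
  simp [hr.factorization_pow, Nat.factorization_eq_zero_of_not_dvd hu]

lemma odd_sq_mod8 {s : ℕ} (h : s % 2 = 1) : s^2 % 8 = 1 := by
  obtain ⟨k, rfl⟩ : ∃ k, s = 2*k+1 := ⟨s/2, by omega⟩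
  rcases Nat.even_or_odd k with ⟨j, rfl⟩ | ⟨j, rfl⟩
  · have : (2*(j+j)+1)^2 = 8*(2*j^2+j) + 1 := by ring
    omega
  · have : (2*(2*j+1)+1)^2 = 8*(2*j^2+3*j+1) + 1 := by ring
    omega

section PQ
variable {p q : ℕ} (hp : p.Prime) (hq : q.Prime) (hp3 : 3 < p) (hq3 : 3 < q)

include hp hq hp3 hq3

lemma not_three_dvd : ¬ (3 ∣ 2*p*q) := by
  intro h
  rcases (Nat.Prime.dvd_mul (by norm_num)).mp h with h1 | h1
  · rcases (Nat.Prime.dvd_mul (by norm_num)).mp h1 with h2 | h2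
    · omega
    · have := (Nat.prime_dvd_prime_iff_eq (by norm_num) hp).mp h2; omega
  · have := (Nat.prime_dvd_prime_iff_eq (by norm_num) hq).mp h1; omega

lemma not_four_dvd : ¬ (4 ∣ 2*p*q) := by
  rintro ⟨e, he⟩
  have h2 : 2 ∣ p * q := ⟨e, Nat.eq_of_mul_eq_mul_left (show 0 < 2 by norm_num)
    (show 2*(p*q) = 2*(2*e) by rw [← mul_assoc]; omega)⟩
  rcases (Nat.Prime.dvd_mul (by norm_num)).mp h2 with h1 | h1
  · have := (Nat.prime_dvd_prime_iff_eq (by norm_num) hp).mp h1; omega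
  · have := (Nat.prime_dvd_prime_iff_eq (by norm_num) hq).mp h1; omega

omit hp hq hp3 hq3 in
lemma exp_succ_dvd_tau {m r : ℕ} (hm : m ≠ 0) (hr : r.Prime) :
    (m.factorization r + 1) ∣ m.divisors.card :=
  ⟨(ordCompl[r] m).divisors.card, tau_split hr hm⟩

lemma exp_ne_two_three {m r : ℕ} (hm : m ≠ 0) (hr : r.Prime)
    (ht : m.divisors.card = 2*p*q) :
    m.factorization r ≠ 2 ∧ m.factorization r ≠ 3 := by
  have hd := exp_succ_dvd_tau hm hr
  rw [ht] at hd
  constructor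
  · intro h; rw [h] at hd; exact not_three_dvd hp hq hp3 hq3 hd
  · intro h; rw [h] at hd; exact not_four_dvd hp hq hp3 hq3 hd

lemma not_both_odd {m r s : ℕ} (hm : m ≠ 0) (ht : m.divisors.card = 2*p*q)
    (hr : r.Prime) (hs : s.Prime) (hrs : r ≠ s)
    (h1 : Odd (m.factorization r)) (h2 : Odd (m.factorization s)) : False := by
  have e1 := tau_split hr hm
  set c := ordCompl[r] m with hc
  have hc0 : c ≠ 0 := (Nat.ordCompl_pos r (by omega)).ne'
  have hsc : c.factorization s = m.factorization s := by
    rw [hc, Nat.factorization_ordCompl m r, Finsupp.erase_ne (Ne.symm hrs)]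
  have e2 := tau_split hs hc0
  rw [hsc] at e2
  set K := (c / s ^ m.factorization s).divisors.card with hK
  rw [e2, ht] at e1
  obtain ⟨x, hx⟩ := h1
  obtain ⟨y, hy⟩ := h2
  rw [hx, hy] at e1
  apply not_four_dvd hp hq hp3 hq3
  exact ⟨(x+1)*((y+1)*K), by rw [e1]; ring⟩

lemma square_structure {m r : ℕ} (hm : m ≠ 0) (ht : m.divisors.card = 2*p*q)
    (hr : r.Prime) (hodd : Odd (m.factorization r)) :
    ∃ s, m = r ^ (m.factorization r) * s^2 ∧ ¬ r ∣ s := by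
  have heven : ∀ u, Even ((ordCompl[r] m).factorization u) := by
    intro u
    rw [Nat.factorization_ordCompl m r]
    by_cases hur : u = r
    · simp [hur]
    · rw [Finsupp.erase_ne hur]
      by_cases hu : u.Prime
      · rcases Nat.even_or_odd (m.factorization u) with h | h
        · exact h
        · exact absurd (not_both_odd hp hq hp3 hq3 hm ht hr hu (Ne.symm hur) hodd h) id
      · simp [Nat.factorization_eq_zero_of_not_prime m hu]
  obtain ⟨s, hs⟩ := sq_of_even_fact (Nat.ordCompl_pos r (by omega)).ne' heven
  refine ⟨s, ?_, ?_⟩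
  · conv_lhs => rw [← Nat.ordProj_mul_ordCompl_eq_self m r]
    rw [hs]
  · intro hdvd
    exact Nat.not_dvd_ordCompl hr hm (hs ▸ dvd_pow hdvd two_ne_zero)

end PQ

lemma split_factors {c d R t : ℕ} (hc : 3 ≤ c) (hd : 3 ≤ d)
    (hR2 : ¬ 2 ∣ R) (hR3 : ¬ 3 ∣ R) (hRp : R = 1 ∨ R.Prime)
    (ht2 : t % 2 = 1)
    (heq : (t-1) * (t+1) = 2^c * 3^d * R) :
    ∃ k k', ((k = 1 ∧ k' = R) ∨ (k = R ∧ k' = 1)) ∧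
      (k + 1 = 2^(c-2) * 3^d * k' ∨ 3^d * k + 1 = 2^(c-2) * k' ∨
       2^(c-2) * k + 1 = 3^d * k' ∨ 2^(c-2) * 3^d * k + 1 = k') := by
  have hR0 : R ≠ 0 := fun h => hR2 (h ▸ dvd_zero 2)
  have hN0 : 2^c * 3^d * R ≠ 0 := by positivity
  have hx0 : t - 1 ≠ 0 := by
    intro h; rw [h, zero_mul] at heq; exact hN0 heq.symm
  have ht3 : 3 ≤ t := by omega
  have hxdvd : (t-1) ∣ 2^c * 3^d * R := ⟨t+1, heq.symm⟩
  obtain ⟨v, k, hv, hk, hvk⟩ := Nat.dvd_mul.mp hxdvd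
  obtain ⟨v1, v2, hv1, hv2, hv12⟩ := Nat.dvd_mul.mp hv
  obtain ⟨i, hic, rfl⟩ := (Nat.dvd_prime_pow Nat.prime_two).mp hv1
  obtain ⟨j, hjd, rfl⟩ := (Nat.dvd_prime_pow Nat.prime_three).mp hv2
  have hkcase : k = 1 ∨ k = R := by
    rcases hRp with rfl | hRp'
    · exact Or.inl (Nat.dvd_one.mp hk)
    · exact (Nat.dvd_prime hRp').mp hk
  obtain ⟨k', hkk', hkor⟩ : ∃ k', k * k' = R ∧ ((k = 1 ∧ k' = R) ∨ (k = R ∧ k' = 1)) := by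
    rcases hkcase with h | h
    · exact ⟨R, by rw [h, one_mul], Or.inl ⟨h, rfl⟩⟩
    · exact ⟨1, by rw [h, mul_one], Or.inr ⟨h, rfl⟩⟩
  have hx : t - 1 = 2^i * 3^j * k := by rw [← hvk, ← hv12]
  have hk2 : ¬ 2 ∣ k := fun h => hR2 (h.trans hk)
  have hk'2 : ¬ 2 ∣ k' := fun h => hR2 (h.trans ⟨k, by rw [← hkk']; ring⟩)
  have e2 : (2:ℕ)^i * 2^(c-i) = 2^c := by rw [← pow_add]; congr 1; omega
  have e3 : (3:ℕ)^j * 3^(d-j) = 3^d := by rw [← pow_add]; congr 1; omega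
  have hy : t + 1 = 2^(c-i) * 3^(d-j) * k' := by
    have hmul : (t-1) * (2^(c-i) * 3^(d-j) * k') = 2^c * 3^d * R := by
      rw [hx]
      calc (2^i * 3^j * k) * (2^(c-i) * 3^(d-j) * k')
          = (2^i * 2^(c-i)) * ((3^j * 3^(d-j)) * (k * k')) := by ring
        _ = 2^c * 3^d * R := by rw [e2, e3, hkk']; ring
    exact Nat.eq_of_mul_eq_mul_left (Nat.pos_of_ne_zero hx0) (heq.trans hmul.symm)
  have hdvd2x : 2 ∣ t - 1 := by omega
  have hdvd2y : 2 ∣ t + 1 := by omega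
  have ppow_odd : ∀ n : ℕ, ¬ 2 ∣ (3:ℕ)^n := by
    intro n h
    have := Nat.Prime.dvd_of_dvd_pow Nat.prime_two h
    omega
  have hi1 : 1 ≤ i := by
    by_contra h
    push_neg at h
    interval_cases i
    rw [hx] at hdvd2x
    simp only [pow_zero, one_mul] at hdvd2x
    rcases (Nat.Prime.dvd_mul Nat.prime_two).mp hdvd2x with h' | h'
    · exact ppow_odd j h'
    · exact hk2 h'
  have hci1 : 1 ≤ c - i := by
    by_contra h
    push_neg at h
    have hci : c - i = 0 := by omega
    rw [hci] at hy
    simp only [pow_zero, one_mul] at hy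
    have : 2 ∣ 3^(d-j) * k' := hy ▸ hdvd2y
    rcases (Nat.Prime.dvd_mul Nat.prime_two).mp this with h' | h'
    · exact ppow_odd (d-j) h'
    · exact hk'2 h'
  have hii : i = 1 ∨ c - i = 1 := by
    by_contra h
    push_neg at h
    have h4x : (4:ℕ) ∣ t - 1 := by
      rw [hx]
      exact Dvd.dvd.mul_right (Dvd.dvd.mul_right (by
        have h22 : (2:ℕ)^2 ∣ 2^i := pow_dvd_pow 2 (by omega)
        simpa using h22) _) _
    have h4y : (4:ℕ) ∣ t + 1 := by
      rw [hy]
      exact Dvd.dvd.mul_right (Dvd.dvd.mul_right (by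
        have h22 : (2:ℕ)^2 ∣ 2^(c-i) := pow_dvd_pow 2 (by omega)
        simpa using h22) _) _
    obtain ⟨u1, hu1⟩ := h4x
    obtain ⟨u2, hu2⟩ := h4y
    omega
  have hjj : j = 0 ∨ j = d := by
    by_contra h
    push_neg at h
    have h3x : (3:ℕ) ∣ t - 1 := by
      rw [hx]
      exact Dvd.dvd.mul_right (Dvd.dvd.mul_left (dvd_pow_self 3 (by omega : j ≠ 0)) _) _
    have h3y : (3:ℕ) ∣ t + 1 := by
      rw [hy]
      exact Dvd.dvd.mul_right (Dvd.dvd.mul_left (dvd_pow_self 3 (by omega : d - j ≠ 0)) _) _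
    obtain ⟨u1, hu1⟩ := h3x
    obtain ⟨u2, hu2⟩ := h3y
    omega
  refine ⟨k, k', hkor, ?_⟩
  have epow : (2:ℕ)^(c-1) = 2 * 2^(c-2) := by
    rw [← pow_succ']; congr 1; omega
  rcases hii with hi | hi
  · rcases hjj with hj | hj
    · left
      have hx' : t - 1 = 2 * k := by rw [hx, hi, hj]; norm_num
      have hy' : t + 1 = 2 * (2^(c-2) * 3^d * k') := by
        rw [hy, hi, hj, Nat.sub_zero, epow]; ring
      set B := 2^(c-2) * 3^d * k' with hB
      omega
    · right; left
      have hx' : t - 1 = 2 * (3^d * k) := by rw [hx, hi, hj]; ring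
      have hy' : t + 1 = 2 * (2^(c-2) * k') := by
        rw [hy, hi, hj, Nat.sub_self, epow, pow_zero]; ring
      set A := 3^d * k with hA
      set B := 2^(c-2) * k' with hB
      omega
  · have hieq : i = c - 1 := by omega
    rcases hjj with hj | hj
    · right; right; left
      have hx' : t - 1 = 2 * (2^(c-2) * k) := by
        rw [hx, hieq, hj, epow, pow_zero]; ring
      have hy' : t + 1 = 2 * (3^d * k') := by
        rw [hy, hi, hj, Nat.sub_zero, pow_one]; ring
      set A := 2^(c-2) * k with hA
      set B := 3^d * k' with hB
      omega
    · right; right; right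
      have hx' : t - 1 = 2 * (2^(c-2) * 3^d * k) := by
        rw [hx, hieq, hj, epow]; ring
      have hy' : t + 1 = 2 * k' := by
        rw [hy, hi, hj, Nat.sub_self, pow_one, pow_zero]; ring
      set A := 2^(c-2) * 3^d * k with hA
      omega

lemma sq_mod3 {s : ℕ} (h : ¬ 3 ∣ s) : s^2 % 3 = 1 := by
  have h3 : s % 3 = 1 ∨ s % 3 = 2 := by
    have : s % 3 ≠ 0 := fun h0 => h (Nat.dvd_of_mod_eq_zero h0)
    omega
  rcases h3 with h3 | h3 <;> rw [Nat.pow_mod, h3] <;> norm_num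

lemma eq_one_of_tau_one {R : ℕ} (hR0 : R ≠ 0) (h : R.divisors.card = 1) : R = 1 := by
  by_contra hne
  have hsub : ({1, R} : Finset ℕ) ⊆ R.divisors := by
    intro x hx
    simp only [Finset.mem_insert, Finset.mem_singleton] at hx
    rcases hx with rfl | rfl
    · exact Nat.one_mem_divisors.mpr hR0
    · exact Nat.mem_divisors.mpr ⟨dvd_rfl, hR0⟩
  have hcard : ({1, R} : Finset ℕ).card = 2 := by
    rw [Finset.card_insert_of_notMem (by simp [Ne.symm hne]), Finset.card_singleton]
  have := Finset.card_le_card hsub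
  omega

lemma prime_of_tau_two {R : ℕ} (hR0 : R ≠ 0) (h : R.divisors.card = 2) : R.Prime := by
  have hR1 : R ≠ 1 := by
    rintro rfl
    simp [Nat.divisors_one] at h
  have h2R : 2 ≤ R := by omega
  rw [Nat.prime_def]
  refine ⟨h2R, fun m hm => ?_⟩
  have hsub : ({1, R} : Finset ℕ) ⊆ R.divisors := by
    intro x hx
    simp only [Finset.mem_insert, Finset.mem_singleton] at hx
    rcases hx with rfl | rfl
    · exact Nat.one_mem_divisors.mpr hR0
    · exact Nat.mem_divisors.mpr ⟨dvd_rfl, hR0⟩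
  have hcard : ({1, R} : Finset ℕ).card = 2 := by
    rw [Finset.card_insert_of_notMem (by simp [Ne.symm hR1]), Finset.card_singleton]
  have heq : ({1, R} : Finset ℕ) = R.divisors :=
    Finset.eq_of_subset_of_card_le hsub (by rw [h, hcard])
  have hmem : m ∈ R.divisors := Nat.mem_divisors.mpr ⟨hm, hR0⟩
  rw [← heq] at hmem
  simpa using hmem

lemma tauR_small {p q A B d : ℕ} (hp : p.Prime) (hq : q.Prime) (hp3 : 3 < p) (hq3 : 3 < q)
    (hA : 5 ≤ A) (hB : 5 ≤ B) (heq : A * (B * d) = 2*p*q) : d = 1 ∨ d = 2 := by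
  have key : ∀ r x : ℕ, r.Prime → x ∣ 2*r → 5 ≤ x → r ∣ x := by
    intro r x hr hx h5
    by_contra hrx
    have hco : Nat.Coprime x r := Nat.coprime_comm.mp ((Nat.Prime.coprime_iff_not_dvd hr).mpr hrx)
    have hx2 : x ∣ 2 := hco.dvd_of_dvd_mul_right hx
    have := Nat.le_of_dvd (by norm_num) hx2
    omega
  have hpd : ¬ p ∣ d := by
    rintro ⟨e, rfl⟩
    have hcan : A * (B * e) = 2*q := by
      apply Nat.eq_of_mul_eq_mul_left hp.pos
      calc p * (A * (B * e)) = A * (B * (p * e)) := by ring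
        _ = 2*p*q := heq
        _ = p * (2*q) := by ring
    have hda : A ∣ 2*q := ⟨B*e, hcan.symm⟩
    have hdb : B ∣ 2*q := ⟨A*e, by rw [← hcan]; ring⟩
    obtain ⟨x, hx⟩ := key q A hq hda (by omega)
    obtain ⟨y, hy⟩ := key q B hq hdb (by omega)
    have h2 : q * (x*y*e) = 2 := by
      apply Nat.eq_of_mul_eq_mul_left hq.pos
      calc q * (q * (x*y*e)) = (q*x) * ((q*y) * e) := by ring
        _ = A * (B * e) := by rw [← hx, ← hy]
        _ = 2*q := hcan
        _ = q * 2 := by ring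
    have : q ∣ 2 := ⟨x*y*e, h2.symm⟩
    have := Nat.le_of_dvd (by norm_num) this
    omega
  have hqd : ¬ q ∣ d := by
    rintro ⟨e, rfl⟩
    have hcan : A * (B * e) = 2*p := by
      apply Nat.eq_of_mul_eq_mul_left hq.pos
      calc q * (A * (B * e)) = A * (B * (q * e)) := by ring
        _ = 2*p*q := heq
        _ = q * (2*p) := by ring
    have hda : A ∣ 2*p := ⟨B*e, hcan.symm⟩
    have hdb : B ∣ 2*p := ⟨A*e, by rw [← hcan]; ring⟩
    obtain ⟨x, hx⟩ := key p A hp hda (by omega)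
    obtain ⟨y, hy⟩ := key p B hp hdb (by omega)
    have h2 : p * (x*y*e) = 2 := by
      apply Nat.eq_of_mul_eq_mul_left hp.pos
      calc p * (p * (x*y*e)) = (p*x) * ((p*y) * e) := by ring
        _ = A * (B * e) := by rw [← hx, ← hy]
        _ = 2*p := hcan
        _ = p * 2 := by ring
    have : p ∣ 2 := ⟨x*y*e, h2.symm⟩
    have := Nat.le_of_dvd (by norm_num) this
    omega
  have hdd : d ∣ 2*p*q := ⟨A*B, by rw [← heq]; ring⟩
  have hcq : Nat.Coprime d q := Nat.coprime_comm.mp ((Nat.Prime.coprime_iff_not_dvd hq).mpr hqd)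
  have hdd2 : d ∣ 2*p := hcq.dvd_of_dvd_mul_right hdd
  have hcp : Nat.Coprime d p := Nat.coprime_comm.mp ((Nat.Prime.coprime_iff_not_dvd hp).mpr hpd)
  have hd2 : d ∣ 2 := hcp.dvd_of_dvd_mul_right hdd2
  exact (Nat.dvd_prime Nat.prime_two).mp hd2

set_option maxHeartbeats 3000000 in
lemma final_kill {X Y R : ℕ} (hX : 2 ≤ X) (hY : 27 ≤ Y) (hR1 : 1 ≤ R)
    (hR5 : R = 1 ∨ 5 ≤ R)
    (h1 : ∃ k k', ((k = 1 ∧ k' = R) ∨ (k = R ∧ k' = 1)) ∧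
      (k + 1 = X * (3 * Y) * k' ∨ 3 * Y * k + 1 = X * k' ∨
       X * k + 1 = 3 * Y * k' ∨ X * (3 * Y) * k + 1 = k'))
    (h2 : ∃ k k', ((k = 1 ∧ k' = R) ∨ (k = R ∧ k' = 1)) ∧
      (k + 1 = 2 * X * Y * k' ∨ Y * k + 1 = 2 * X * k' ∨
       2 * X * k + 1 = Y * k' ∨ 2 * X * Y * k + 1 = k')) :
    False := by
  have B1 : 2 * Y ≤ X * Y := Nat.mul_le_mul_right Y hX
  have B2 : X * 27 ≤ X * Y := Nat.mul_le_mul_left X hY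
  have B3 : 2 * (X * Y) ≤ X * (X * Y) := Nat.mul_le_mul_right _ hX
  have B5 : 27 * Y ≤ Y * Y := Nat.mul_le_mul_right Y hY
  have B12 : X * (27 * Y) ≤ X * (Y * Y) := Nat.mul_le_mul_left X B5
  have B6 : 27 * R ≤ Y * R := Nat.mul_le_mul_right R hY
  have B7 : 2 * R ≤ X * R := Nat.mul_le_mul_right R hX
  have B13 : 27 * (Y * R) ≤ Y * (Y * R) := Nat.mul_le_mul_right _ hY
  have B14 : Y * 1 ≤ Y * R := Nat.mul_le_mul_left Y hR1
  have B15 : Y * R * 1 ≤ Y * R * R := Nat.mul_le_mul_left _ hR1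
  have G1 : 2 * (3 * 27) * 1 ≤ X * (3 * Y) * R :=
    Nat.mul_le_mul (Nat.mul_le_mul hX (by omega)) hR1
  have G2 : 2 * 2 * 27 * 1 ≤ 2 * X * Y * R :=
    Nat.mul_le_mul (Nat.mul_le_mul (Nat.mul_le_mul (le_refl 2) hX) hY) hR1
  obtain ⟨k1, k1', hor1, hc1⟩ := h1
  obtain ⟨k2, k2', hor2, hc2⟩ := h2
  have hT : (R + 1 = X * (3 * Y) * 1) ∨ (3 * Y * 1 + 1 = X * R) ∨ (3 * Y * R + 1 = X * 1) ∨ (X * 1 + 1 = 3 * Y * R) ∨ (X * R + 1 = 3 * Y * 1) ∨ (X * (3 * Y) * 1 + 1 = R) := by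
    rcases hor1 with ⟨ha, hb⟩ | ⟨ha, hb⟩ <;> rw [ha, hb] at hc1 <;>
      rcases hc1 with hc1 | hc1 | hc1 | hc1
    · exact absurd hc1 (by intro hc1; nlinarith [G1])
    · exact Or.inr (Or.inl hc1)
    · exact Or.inr (Or.inr (Or.inr (Or.inl hc1)))
    · exact Or.inr (Or.inr (Or.inr (Or.inr (Or.inr hc1))))
    · exact Or.inl hc1
    · exact Or.inr (Or.inr (Or.inl hc1))
    · exact Or.inr (Or.inr (Or.inr (Or.inr (Or.inl hc1))))
    · exact absurd hc1 (by intro hc1; nlinarith [G1])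
  have hW : (R + 1 = 2 * X * Y * 1) ∨ (Y * 1 + 1 = 2 * X * R) ∨ (Y * R + 1 = 2 * X * 1) ∨ (2 * X * 1 + 1 = Y * R) ∨ (2 * X * R + 1 = Y * 1) ∨ (2 * X * Y * 1 + 1 = R) := by
    rcases hor2 with ⟨ha, hb⟩ | ⟨ha, hb⟩ <;> rw [ha, hb] at hc2 <;>
      rcases hc2 with hc2 | hc2 | hc2 | hc2
    · exact absurd hc2 (by intro hc2; nlinarith [G2])
    · exact Or.inr (Or.inl hc2)
    · exact Or.inr (Or.inr (Or.inr (Or.inl hc2)))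
    · exact Or.inr (Or.inr (Or.inr (Or.inr (Or.inr hc2))))
    · exact Or.inl hc2
    · exact Or.inr (Or.inr (Or.inl hc2))
    · exact Or.inr (Or.inr (Or.inr (Or.inr (Or.inl hc2))))
    · exact absurd hc2 (by intro hc2; nlinarith [G2])
  clear hc1 hc2
  rcases hT with h1' | h1' | h1' | h1' | h1' | h1' <;>
    rcases hW with h2' | h2' | h2' | h2' | h2' | h2'
  · linarith [h1', h2', B1, hY]
  · linarith [congrArg (· * (2*X)) h1', h2', B3, B1, B2]
  · linarith [congrArg (· * (Y)) h1', h2', B12, B1, B2, hY, hX]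
  · linarith [congrArg (· * (Y)) h1', h2', B12, B1, B2, hY, hX]
  · linarith [congrArg (· * (2*X)) h1', h2', B3, B1, B2]
  · linarith [h1', h2', B1, hY]
  · linarith [congrArg (· * (X)) h2', h1', B3, B1, B2]
  · linarith [h1', h2', hY]
  · rcases hR5 with rfl | hR5
    · linarith [h1', h2', hY, hX]
    · have B10 : 25 * Y ≤ R * R * Y := Nat.mul_le_mul (Nat.mul_le_mul hR5 hR5) (le_refl Y)
      linarith [congrArg (· * (R)) h2', h1', B10, hR5, hY]
  · rcases hR5 with rfl | hR5
    · linarith [h1', h2', hY]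
    · have B10 : 25 * Y ≤ R * R * Y := Nat.mul_le_mul (Nat.mul_le_mul hR5 hR5) (le_refl Y)
      linarith [congrArg (· * (R)) h2', h1', B10, B7, hY]
  · linarith [h1', h2', hY]
  · linarith [congrArg (· * (X)) h2', h1', B3, B1, B2]
  · linarith [congrArg (· * (2*Y)) h1', h2', B13, B6, hY, hR1]
  · linarith [congrArg (· * (2*R)) h1', h2', B15, B14, hY]
  · linarith [h1', h2', B14, hY]
  · linarith [h1', h2', B14, hY]
  · linarith [congrArg (· * (2*R)) h1', h2', B15, B14, hY]
  · linarith [congrArg (· * (2*Y)) h1', h2', B13, B6, hR1]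
  · linarith [congrArg (· * (2*Y)) h1', h2', B13, B6, hR1, hY]
  · linarith [congrArg (· * (2*R)) h1', h2', B15, B14, hY]
  · linarith [h1', h2', B14, hY]
  · linarith [h1', h2', B14, hY]
  · linarith [congrArg (· * (2*R)) h1', h2', B15, B14, hY]
  · linarith [congrArg (· * (2*Y)) h1', h2', B13, B6, hR1]
  · linarith [congrArg (· * (X)) h2', h1', B3, B1, B2]
  · linarith [h1', h2', hY]
  · rcases hR5 with rfl | hR5
    · linarith [h1', h2', hY]
    · have B10 : 25 * Y ≤ R * R * Y := Nat.mul_le_mul (Nat.mul_le_mul hR5 hR5) (le_refl Y)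
      linarith [congrArg (· * (R)) h2', h1', B10, hR5, hY]
  · rcases hR5 with rfl | hR5
    · linarith [h1', h2', hY]
    · have B10 : 25 * Y ≤ R * R * Y := Nat.mul_le_mul (Nat.mul_le_mul hR5 hR5) (le_refl Y)
      linarith [congrArg (· * (R)) h2', h1', B10, B7, hY]
  · linarith [h1', h2', hY]
  · linarith [congrArg (· * (X)) h2', h1', B3, B1, hY]
  · linarith [h1', h2', B1, hY]
  · linarith [congrArg (· * (2*X)) h1', h2', B3, B1, B2]
  · linarith [congrArg (· * (Y)) h1', h2', B12, B2, hY, hX]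
  · linarith [congrArg (· * (Y)) h1', h2', B12, B2, hY, hX]
  · linarith [congrArg (· * (2*X)) h1', h2', B3, B1]
  · linarith [h1', h2', B1, hY]

lemma endgameB {p q n t w : ℕ} (hp : p.Prime) (hq : q.Prime) (hp3 : 3 < p) (hq3 : 3 < q)
    (htau : (n+1).divisors.card = 2*p*q)
    (ha4 : 4 ≤ (n+1).factorization 2) (hb4 : 4 ≤ (n+1).factorization 3)
    (hteq : n + 3 = 2 * t^2) (htodd : t % 2 = 1)
    (hweq : n + 4 = 3 * w^2) (hwodd : w % 2 = 1) :
    False := by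
  have hm0 : n + 1 ≠ 0 := by omega
  obtain ⟨α, hα⟩ : ∃ α, (n+1).factorization 2 = α + 3 := ⟨(n+1).factorization 2 - 3, by omega⟩
  have hα1 : 1 ≤ α := by omega
  obtain ⟨β, hβ⟩ : ∃ β, (n+1).factorization 3 = β + 1 := ⟨(n+1).factorization 3 - 1, by omega⟩
  have hβ3 : 3 ≤ β := by omega
  set c2 := ordCompl[2] (n+1) with hc2def
  have hc20 : c2 ≠ 0 := (Nat.ordCompl_pos 2 hm0).ne'
  have hc2v : c2.factorization 3 = β + 1 := by
    rw [hc2def, Nat.factorization_ordCompl (n+1) 2, Finsupp.erase_ne (by norm_num)]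
    exact hβ
  set R := ordCompl[3] c2 with hRdef
  have hR0 : R ≠ 0 := (Nat.ordCompl_pos 3 hc20).ne'
  have hR1 : 1 ≤ R := Nat.pos_of_ne_zero hR0
  have hR2 : ¬ 2 ∣ R :=
    fun h2R => Nat.not_dvd_ordCompl Nat.prime_two hm0 (dvd_trans h2R (Nat.ordCompl_dvd c2 3))
  have hR3 : ¬ 3 ∣ R := Nat.not_dvd_ordCompl Nat.prime_three hc20
  have hsplit : n + 1 = 2^(α+3) * 3^(β+1) * R := by
    have e1 : n + 1 = 2^((n+1).factorization 2) * c2 :=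
      (Nat.ordProj_mul_ordCompl_eq_self (n+1) 2).symm
    have e2 : c2 = 3^(c2.factorization 3) * R :=
      (Nat.ordProj_mul_ordCompl_eq_self c2 3).symm
    rw [hc2v] at e2
    rw [hα] at e1
    rw [e1, e2]; ring
  -- tau chain
  have e1 := tau_split (r := 2) (m := n+1) Nat.prime_two hm0
  rw [htau, ← hc2def, hα] at e1
  have e2 := tau_split (r := 3) (m := c2) Nat.prime_three hc20
  rw [← hRdef, hc2v] at e2
  rw [e2] at e1
  have htR : R.divisors.card = 1 ∨ R.divisors.card = 2 :=
    tauR_small hp hq hp3 hq3 (show 5 ≤ α+3+1 by omega) (show 5 ≤ β+1+1 by omega) e1.symm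
  have hRor : R = 1 ∨ R.Prime :=
    htR.imp (eq_one_of_tau_one hR0) (prime_of_tau_two hR0)
  have hR5 : R = 1 ∨ 5 ≤ R := by
    rcases hRor with h1 | hPr
    · exact Or.inl h1
    · right
      rcases Nat.lt_or_ge R 5 with h5 | h5
      · exfalso
        have h2le := hPr.two_le
        interval_cases R
        · exact hR2 (by norm_num)
        · exact hR3 (by norm_num)
        · exact (by norm_num : ¬ (4:ℕ).Prime) hPr
      · exact h5
  -- t equation
  have hPt : n + 1 = 2 * (2^(α+2) * 3^(β+1) * R) := by
    rw [hsplit, show (2:ℕ)^(α+3) = 2 * 2^(α+2) from by rw [← pow_succ']]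
    ring
  have ht2 : t^2 = 2^(α+2) * 3^(β+1) * R + 1 := by
    apply Nat.eq_of_mul_eq_mul_left (show 0 < 2 by norm_num)
    calc 2 * t^2 = n + 3 := hteq.symm
      _ = (n+1) + 2 := by ring
      _ = 2 * (2^(α+2) * 3^(β+1) * R) + 2 := by rw [hPt]
      _ = 2 * (2^(α+2) * 3^(β+1) * R + 1) := by ring
  have hteq2 : (t-1) * (t+1) = 2^(α+2) * 3^(β+1) * R := by
    obtain ⟨u, rfl⟩ : ∃ u, t = u + 1 := ⟨t - 1, by omega⟩
    have hr : u * (u+2) + 1 = 2^(α+2) * 3^(β+1) * R + 1 := by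
      rw [show u * (u+2) + 1 = (u+1)^2 from by ring]
      exact ht2
    have hr2 := Nat.add_right_cancel hr
    calc (u+1-1) * (u+1+1) = u * (u+2) := by simp
      _ = 2^(α+2) * 3^(β+1) * R := hr2
  -- w equation
  have hPw : n + 1 = 3 * (2^(α+3) * 3^β * R) := by
    rw [hsplit, show (3:ℕ)^(β+1) = 3 * 3^β from by rw [← pow_succ']]
    ring
  have hw2 : w^2 = 2^(α+3) * 3^β * R + 1 := by
    apply Nat.eq_of_mul_eq_mul_left (show 0 < 3 by norm_num)
    calc 3 * w^2 = n + 4 := hweq.symm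
      _ = (n+1) + 3 := by ring
      _ = 3 * (2^(α+3) * 3^β * R) + 3 := by rw [hPw]
      _ = 3 * (2^(α+3) * 3^β * R + 1) := by ring
  have hweq2 : (w-1) * (w+1) = 2^(α+3) * 3^β * R := by
    obtain ⟨u, rfl⟩ : ∃ u, w = u + 1 := ⟨w - 1, by omega⟩
    have hr : u * (u+2) + 1 = 2^(α+3) * 3^β * R + 1 := by
      rw [show u * (u+2) + 1 = (u+1)^2 from by ring]
      exact hw2
    have hr2 := Nat.add_right_cancel hr
    calc (u+1-1) * (u+1+1) = u * (u+2) := by simp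
      _ = 2^(α+3) * 3^β * R := hr2
  -- split
  have hT := split_factors (c := α+2) (d := β+1) (by omega) (by omega) hR2 hR3 hRor htodd hteq2
  have hW := split_factors (c := α+3) (d := β) (by omega) (by omega) hR2 hR3 hRor hwodd hweq2
  rw [show α+2-2 = α by omega, show (3:ℕ)^(β+1) = 3 * 3^β from by rw [← pow_succ']] at hT
  rw [show α+3-2 = α+1 by omega, show (2:ℕ)^(α+1) = 2 * 2^α from by rw [← pow_succ']] at hW
  have hX : 2 ≤ 2^α := by
    calc (2:ℕ) = 2^1 := by norm_num
      _ ≤ 2^α := Nat.pow_le_pow_right (by norm_num) hα1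
  have hY : 27 ≤ 3^β := by
    calc (27:ℕ) = 3^3 := by norm_num
      _ ≤ 3^β := Nat.pow_le_pow_right (by norm_num) hβ3
  exact final_kill hX hY hR1 hR5 hT hW

theorem M_two_p_q_le_four (p q : ℕ) (hp : p.Prime) (hq : q.Prime)
    (hp3 : 3 < p) (hq3 : 3 < q) :
    ∀ n : ℕ, 0 < n → ¬ (∀ i < 5, (n + i).divisors.card = 2 * p * q) := by
  intro n hn h
  have hnz : ∀ i : ℕ, n + i ≠ 0 := fun i => by omega
  have h0' : n.divisors.card = 2*p*q := by simpa using h 0 (by norm_num)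
  -- no element ≡ 4 mod 8
  have hA : ∀ i, i < 5 → (n+i) % 8 ≠ 4 := by
    intro i hi h8
    have h1 : n + i = 2^2 * (2*((n+i)/8)+1) := by
      rw [show (2:ℕ)^2 = 4 by norm_num]; omega
    have hv : (n+i).factorization 2 = 2 := by
      rw [h1]; exact fact_pow_mul Nat.prime_two (by omega) (by omega)
    exact (exp_ne_two_three hp hq hp3 hq3 (hnz i) Nat.prime_two (h i hi)).1 hv
  -- elements ≡ 2 mod 4 are 2 * odd square
  have hsq2 : ∀ i, i < 5 → (n+i) % 4 = 2 → ∃ s, n + i = 2 * s^2 ∧ s % 2 = 1 := by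
    intro i hi h4
    have h1 : n + i = 2^1 * (2*((n+i)/4)+1) := by
      rw [show (2:ℕ)^1 = 2 by norm_num]; omega
    have hv : (n+i).factorization 2 = 1 := by
      rw [h1]; exact fact_pow_mul Nat.prime_two (by omega) (by omega)
    obtain ⟨s, hs, hs2⟩ := square_structure hp hq hp3 hq3 (hnz i) (h i hi) Nat.prime_two
      (by rw [hv]; exact odd_one)
    rw [hv, pow_one] at hs
    refine ⟨s, hs, ?_⟩
    omega
  have hB : ∀ i, i < 5 → (n+i) % 4 = 2 → (n+i) % 16 = 2 := by
    intro i hi h4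
    obtain ⟨s, hs, hsodd⟩ := hsq2 i hi h4
    have h8 := odd_sq_mod8 hsodd
    obtain ⟨j, hj⟩ : ∃ j, s^2 = 8*j+1 := ⟨s^2/8, by omega⟩
    rw [hj] at hs
    omega
  have h16 : n % 16 = 15 := by
    have a0 := hA 0 (by norm_num)
    have a1 := hA 1 (by norm_num)
    have a2 := hA 2 (by norm_num)
    have a3 := hA 3 (by norm_num)
    have a4 := hA 4 (by norm_num)
    have hBor : ∀ i, i < 5 → ((n+i)%4 ≠ 2 ∨ (n+i)%16 = 2) := by
      intro i hi
      by_cases hx : (n+i)%4 = 2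
      · exact Or.inr (hB i hi hx)
      · exact Or.inl hx
    have c0 := hBor 0 (by norm_num)
    have c1 := hBor 1 (by norm_num)
    have c2 := hBor 2 (by norm_num)
    have c3 := hBor 3 (by norm_num)
    have c4 := hBor 4 (by norm_num)
    rcases c0 with c0|c0 <;> rcases c1 with c1|c1 <;> rcases c2 with c2|c2 <;>
      rcases c3 with c3|c3 <;> rcases c4 with c4|c4 <;> omega
  obtain ⟨t, hteq, htodd⟩ := hsq2 3 (by norm_num) (by omega)
  have ha4 : 4 ≤ (n+1).factorization 2 := by
    have h8d : (2:ℕ)^3 ∣ n + 1 := by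
      rw [show (2:ℕ)^3 = 8 by norm_num]; exact ⟨(n+1)/8, by omega⟩
    have h3le := (Nat.Prime.pow_dvd_iff_le_factorization Nat.prime_two (hnz 1)).mp h8d
    have hne := exp_ne_two_three hp hq hp3 hq3 (hnz 1) Nat.prime_two (h 1 (by norm_num))
    omega
  have h3cases : n % 3 = 0 ∨ n % 3 = 1 ∨ n % 3 = 2 := by omega
  rcases h3cases with h3 | h3 | h3
  · -- n ≡ 0 (mod 3)
    have hn0 : n ≠ 0 := by omega
    have hv1 : 1 ≤ n.factorization 3 := by
      have hdd : (3:ℕ)^1 ∣ n := by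
        rw [show (3:ℕ)^1 = 3 by norm_num]; exact ⟨n/3, by omega⟩
      exact (Nat.Prime.pow_dvd_iff_le_factorization Nat.prime_three hn0).mp hdd
    by_cases hv : n.factorization 3 = 1
    · obtain ⟨s, hs, h3s⟩ := square_structure hp hq hp3 hq3 hn0 h0' Nat.prime_three
        (by rw [hv]; exact odd_one)
      rw [hv, pow_one] at hs
      have hsodd : s % 2 = 1 := by
        rcases Nat.even_or_odd s with ⟨u, hu⟩ | ho
        · exfalso
          have he : n = 2*(6*u^2) := by rw [hs, hu]; ring
          omega
        · exact Nat.odd_iff.mp ho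
      have h8 := odd_sq_mod8 hsodd
      obtain ⟨j, hj⟩ : ∃ j, s^2 = 8*j+1 := ⟨s^2/8, by omega⟩
      rw [hj] at hs
      omega
    · have hv2 : 2 ≤ n.factorization 3 := by omega
      obtain ⟨u, hu⟩ : (9:ℕ) ∣ n := by
        have hdd := (Nat.Prime.pow_dvd_iff_le_factorization Nat.prime_three hn0).mpr hv2
        rw [show (3:ℕ)^2 = 9 by norm_num] at hdd
        exact hdd
      have hv31 : (n+3).factorization 3 = 1 := by
        have h1 : n + 3 = 3^1 * (3*u+1) := by
          rw [show (3:ℕ)^1 = 3 by norm_num]; omega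
        rw [h1]; exact fact_pow_mul Nat.prime_three (by omega) (by omega)
      have hv21 : (n+3).factorization 2 = 1 := by
        have h1 : n + 3 = 2^1 * (2*((n+3)/4)+1) := by
          rw [show (2:ℕ)^1 = 2 by norm_num]; omega
        rw [h1]; exact fact_pow_mul Nat.prime_two (by omega) (by omega)
      exact not_both_odd hp hq hp3 hq3 (hnz 3) (h 3 (by norm_num)) Nat.prime_two
        Nat.prime_three (by norm_num) (by rw [hv21]; exact odd_one) (by rw [hv31]; exact odd_one)
  · -- n ≡ 1 (mod 3)
    have h31 : (n+3) % 3 = 1 := by omega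
    rw [hteq] at h31
    have ht3 : t % 3 = 0 ∨ t % 3 = 1 ∨ t % 3 = 2 := by omega
    rcases ht3 with hm | hm | hm <;>
      rw [Nat.mul_mod, Nat.pow_mod, hm] at h31 <;> norm_num at h31
  · -- n ≡ 2 (mod 3)
    have hb1 : 1 ≤ (n+1).factorization 3 := by
      have hdd : (3:ℕ)^1 ∣ n + 1 := by
        rw [show (3:ℕ)^1 = 3 by norm_num]; exact ⟨(n+1)/3, by omega⟩
      exact (Nat.Prime.pow_dvd_iff_le_factorization Nat.prime_three (hnz 1)).mp hdd
    have hbne := exp_ne_two_three hp hq hp3 hq3 (hnz 1) Nat.prime_three (h 1 (by norm_num))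
    by_cases hb : (n+1).factorization 3 = 1
    · -- subcase A
      obtain ⟨s, hs, h3s⟩ := square_structure hp hq hp3 hq3 (hnz 1) (h 1 (by norm_num))
        Nat.prime_three (by rw [hb]; exact odd_one)
      rw [hb, pow_one] at hs
      have hs3 := sq_mod3 h3s
      obtain ⟨j, hj⟩ : ∃ j, s^2 = 3*j+1 := ⟨s^2/3, by omega⟩
      rw [hj] at hs
      have h46 : (n+4) % 9 = 6 := by omega
      have hv41 : (n+4).factorization 3 = 1 := by
        have h1 : n + 4 = 3^1 * (3*((n+4)/9)+2) := by
          rw [show (3:ℕ)^1 = 3 by norm_num]; omega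
        rw [h1]; exact fact_pow_mul Nat.prime_three (by omega) (by omega)
      obtain ⟨w, hw, h3w⟩ := square_structure hp hq hp3 hq3 (hnz 4) (h 4 (by norm_num))
        Nat.prime_three (by rw [hv41]; exact odd_one)
      rw [hv41, pow_one] at hw
      have hw3 := sq_mod3 h3w
      obtain ⟨j', hj'⟩ : ∃ j', w^2 = 3*j'+1 := ⟨w^2/3, by omega⟩
      rw [hj'] at hw
      omega
    · -- subcase B
      have hb4 : 4 ≤ (n+1).factorization 3 := by
        rcases hbne with ⟨h2ne, h3ne⟩
        omega
      obtain ⟨u, hu⟩ : (9:ℕ) ∣ n + 1 := by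
        have hdd := (Nat.Prime.pow_dvd_iff_le_factorization Nat.prime_three (hnz 1)).mpr
          (show 2 ≤ (n+1).factorization 3 by omega)
        rw [show (3:ℕ)^2 = 9 by norm_num] at hdd
        exact hdd
      have hv41 : (n+4).factorization 3 = 1 := by
        have h1 : n + 4 = 3^1 * (3*u+1) := by
          rw [show (3:ℕ)^1 = 3 by norm_num]; omega
        rw [h1]; exact fact_pow_mul Nat.prime_three (by omega) (by omega)
      obtain ⟨w, hw, h3w⟩ := square_structure hp hq hp3 hq3 (hnz 4) (h 4 (by norm_num))
        Nat.prime_three (by rw [hv41]; exact odd_one)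
      rw [hv41, pow_one] at hw
      have hwodd : w % 2 = 1 := by
        rcases Nat.even_or_odd w with ⟨u', hu'⟩ | ho
        · exfalso
          have he : n + 4 = 2*(6*u'^2) := by rw [hw, hu']; ring
          omega
        · exact Nat.odd_iff.mp ho
      exact endgameB hp hq hp3 hq3 (h 1 (by norm_num)) ha4 hb4 hteq htodd hw hwodd
end

section
/- There is no run of 16 consecutive positive integers each having exactly 12 divisors, i.e., M(12) ≤ 15. -/
-- factor out powers of 2
lemma factor_two (m : ℕ) (hm : m ≠ 0) :
    ∃ a u, m = 2 ^ a * u ∧ u % 2 = 1 ∧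
      m.divisors.card = (a + 1) * u.divisors.card ∧ 2 ^ a ∣ m ∧ ¬ 2 ^ (a + 1) ∣ m := by
  refine ⟨m.factorization 2, m / 2 ^ m.factorization 2, ?_, ?_, ?_, Nat.ordProj_dvd m 2,
    Nat.pow_succ_factorization_not_dvd hm Nat.prime_two⟩
  · exact (Nat.ordProj_mul_ordCompl_eq_self m 2).symm
  · have := Nat.not_dvd_ordCompl Nat.prime_two hm
    omega
  · have hodd : ¬ 2 ∣ (m / 2 ^ m.factorization 2) := Nat.not_dvd_ordCompl Nat.prime_two hm
    have hcop : Nat.Coprime (2 ^ m.factorization 2) (m / 2 ^ m.factorization 2) :=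
      Nat.Coprime.pow_left _ ((Nat.Prime.coprime_iff_not_dvd Nat.prime_two).mpr hodd)
    conv_lhs => rw [← Nat.ordProj_mul_ordCompl_eq_self m 2]
    rw [hcop.card_divisors_mul, Nat.divisors_prime_pow Nat.prime_two]
    simp


lemma tau_one {u : ℕ} (hu : u ≠ 0) (h : u.divisors.card = 1) : u = 1 := by
  obtain ⟨x, hx⟩ := Finset.card_eq_one.mp h
  have h1 : (1 : ℕ) ∈ u.divisors := Nat.one_mem_divisors.mpr hu
  have h2 : u ∈ u.divisors := Nat.mem_divisors_self u hu
  rw [hx] at h1 h2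
  simp at h1 h2; omega

lemma tau_three {u : ℕ} (hu : u ≠ 0) (h : u.divisors.card = 3) :
    ∃ p, p.Prime ∧ u = p * p := by
  have hu1 : u ≠ 1 := by rintro rfl; simp at h
  set p := u.minFac with hpdef
  have hp : p.Prime := Nat.minFac_prime hu1
  have hpd : p ∣ u := Nat.minFac_dvd u
  have hpu : p ≠ u := by
    rintro h'
    have : u.Prime := h' ▸ hp
    rw [this.divisors] at h
    rw [Finset.card_insert_of_notMem (by simp [Ne.symm this.ne_one]), Finset.card_singleton] at h
    omega
  have hcard : ({1, p, u} : Finset ℕ).card = 3 := by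
    rw [Finset.card_insert_of_notMem (by simp [hp.ne_one.symm, Ne.symm hu1]),
      Finset.card_insert_of_notMem (by simp [hpu]), Finset.card_singleton]
  have hsub : ({1, p, u} : Finset ℕ) ⊆ u.divisors := by
    intro x hx
    simp only [Finset.mem_insert, Finset.mem_singleton] at hx
    rcases hx with rfl | rfl | rfl
    · exact Nat.one_mem_divisors.mpr hu
    · exact Nat.mem_divisors.mpr ⟨hpd, hu⟩
    · exact Nat.mem_divisors_self _ hu
  have heq : u.divisors = {1, p, u} := (Finset.eq_of_subset_of_card_le hsub (by omega)).symm
  have hdp : u / p ∈ u.divisors := Nat.mem_divisors.mpr ⟨Nat.div_dvd_of_dvd hpd, hu⟩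
  rw [heq] at hdp
  simp only [Finset.mem_insert, Finset.mem_singleton] at hdp
  rcases hdp with h' | h' | h'
  · exact absurd ((Nat.eq_mul_of_div_eq_right hpd h').trans (mul_one p)).symm hpu
  · exact ⟨p, hp, Nat.eq_mul_of_div_eq_right hpd h'⟩
  · have := Nat.eq_mul_of_div_eq_right hpd h'
    have h2 : 2 * u ≤ p * u := Nat.mul_le_mul_right u hp.two_le
    omega

lemma odd_sq_mod8_s19 {v : ℕ} (hv : v % 2 = 1) : (v * v) % 8 = 1 := by
  obtain ⟨k, rfl⟩ : ∃ k, v = 2 * k + 1 := ⟨v / 2, by omega⟩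
  obtain ⟨j, hj⟩ : ∃ j, k * (k + 1) = 2 * j := (Nat.even_mul_succ_self k).exists_two_nsmul _ |>.imp fun j h => by simpa [two_nsmul] using h
  have : (2 * k + 1) * (2 * k + 1) = 4 * (k * (k + 1)) + 1 := by ring
  omega


lemma mod16_eight {m : ℕ} (h16 : m % 16 = 8) (h : m.divisors.card = 12) :
    ∃ v, v % 2 = 1 ∧ m = 8 * (v * v) := by
  have hm : m ≠ 0 := by omega
  obtain ⟨a, u, heq, hodd, hcard, hdvd, hndvd⟩ := factor_two m hm
  have h8 : (8 : ℕ) ∣ m := by omega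
  have hn16 : ¬ (16 : ℕ) ∣ m := by omega
  have ha : a = 3 := by
    by_contra hne
    rcases Nat.lt_or_ge a 3 with h' | h'
    · exact hndvd (dvd_trans (pow_dvd_pow 2 (by omega : a + 1 ≤ 3)) h8)
    · exact hn16 (dvd_trans (pow_dvd_pow 2 (by omega : 4 ≤ a)) hdvd)
  subst ha
  have hu : u ≠ 0 := by rintro rfl; simp at heq; omega
  have ht : u.divisors.card = 3 := by omega
  obtain ⟨p, hp, rfl⟩ := tau_three hu ht
  have hpodd : p % 2 = 1 := by
    have h2 := Nat.mul_mod p p 2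
    rcases Nat.mod_two_eq_zero_or_one p with h' | h'
    · rw [h'] at h2; simp at h2; omega
    · exact h'
  exact ⟨p, hpodd, by rw [heq]; ring⟩

lemma mod16_zero {m : ℕ} (h16 : m % 16 = 0) (hm : m ≠ 0) (h : m.divisors.card = 12) :
    (∃ u, u % 2 = 1 ∧ m = 32 * u) ∨ m = 2048 := by
  obtain ⟨a, u, heq, hodd, hcard, hdvd, hndvd⟩ := factor_two m hm
  have h16d : (16 : ℕ) ∣ m := Nat.dvd_of_mod_eq_zero h16
  have ha4 : 4 ≤ a := by
    by_contra h'
    exact hndvd (dvd_trans (pow_dvd_pow 2 (by omega : a + 1 ≤ 4)) h16d)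
  have hu : u ≠ 0 := by rintro rfl; simp at heq; omega
  have ht1 : 1 ≤ u.divisors.card :=
    Finset.card_pos.mpr ⟨1, Nat.one_mem_divisors.mpr hu⟩
  have ha11 : a ≤ 11 := by nlinarith [hcard]
  have hkey : (a = 5 ∧ u.divisors.card = 2) ∨ (a = 11 ∧ u.divisors.card = 1) := by
    interval_cases a <;> omega
  rcases hkey with ⟨rfl, _⟩ | ⟨rfl, h1⟩
  · exact Or.inl ⟨u, hodd, by omega⟩
  · have := tau_one hu h1
    subst this
    right; omega

theorem M_twelve_le_fifteen :
    ∀ n : ℕ, 0 < n → ¬ (∀ i < 16, (n + i).divisors.card = 12) := by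
  intro n hn h
  set i0 := (16 - n % 16) % 16 with hi0
  set i1 := (i0 + 8) % 16 with hi1
  have hi0lt : i0 < 16 := by omega
  have hi1lt : i1 < 16 := by omega
  have hm0 : (n + i0) % 16 = 0 := by omega
  have hm1 : (n + i1) % 16 = 8 := by omega
  obtain ⟨v, hv, hveq⟩ := mod16_eight hm1 (h i1 hi1lt)
  have hv8 := odd_sq_mod8_s19 hv
  have hrel : i1 = i0 + 8 ∨ i0 = i1 + 8 := by omega
  rcases mod16_zero hm0 (by omega) (h i0 hi0lt) with ⟨u, hu, hueq⟩ | h2048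
  · rcases hrel with h' | h' <;> omega
  · have hvsq : v * v = 257 ∨ v * v = 255 := by rcases hrel with h' | h' <;> omega
    have h255 : v * v ≠ 255 := by omega
    have h257 : v * v = 257 := by tauto
    have hvlt : v < 17 := by nlinarith
    interval_cases v <;> omega
end
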